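/- arXiv:1108.4184 — 3 statements merged into one kernel-verified Lean document; each statement's English description precedes it below -/
import Mathlib

section
/- For integers $2 \le k \le t$ and $n \ge 1$, there exists a balanced $t$-partite $k$-uniform hypergraph $H$ with each class of size $n$ satisfying $\widetilde{\delta}_{k-1}(H) = \lceil (t-k+1)n/t \rceil - 1$ that contains no perfect fractional $K_t^k$-matching. -/
open Finset
open scoped Classical

/-- A set of vertices of the `t`-partite vertex set `Fin t × Fin n` is legal if it
meets each class in at most one vertex. -/
def Legal {t n : ℕ} (S : Finset (Fin t × Fin n)) : Prop :=
  ∀ u ∈ S, ∀ v ∈ S, u.1 = v.1 → u = v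

/-- `H` is a `t`-partite `k`-uniform hypergraph with classes of size `n`. -/
def IsPartiteKGraph (t n k : ℕ) (H : Finset (Finset (Fin t × Fin n))) : Prop :=
  ∀ e ∈ H, e.card = k ∧ Legal e

/-- The minimum partite codegree of `H` is at least `d`. -/
def CodegGE (t n k : ℕ) (H : Finset (Finset (Fin t × Fin n))) (d : ℝ) : Prop :=
  ∀ T : Finset (Fin t × Fin n), T.card = k - 1 → Legal T →
    ∀ j : Fin t, (∀ v ∈ T, v.1 ≠ j) →
      d ≤ ((Finset.univ.filter (fun x : Fin n => insert (j, x) T ∈ H)).card : ℝ)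

/-- `S` spans a copy of the complete `k`-graph `K_t^k` in `H` (one vertex per class). -/
def SpansClique (t n k : ℕ) (H : Finset (Finset (Fin t × Fin n)))
    (S : Finset (Fin t × Fin n)) : Prop :=
  S.card = t ∧ Legal S ∧ ∀ e ⊆ S, e.card = k → e ∈ H

/-- `M` is a perfect `K_t^k`-matching in `H`. -/
def IsPerfectKtMatching (t n k : ℕ) (H M : Finset (Finset (Fin t × Fin n))) : Prop :=
  (∀ S ∈ M, SpansClique t n k H S) ∧
  (M : Set (Finset (Fin t × Fin n))).PairwiseDisjoint id ∧
  ∀ v : Fin t × Fin n, ∃ S ∈ M, v ∈ S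

/-- `w` is a perfect fractional `K_t^k`-matching of `H`. -/
def IsPerfectFracMatching (t n k : ℕ) (H : Finset (Finset (Fin t × Fin n)))
    (w : Finset (Fin t × Fin n) → ℝ) : Prop :=
  (∀ S, 0 ≤ w S ∧ w S ≤ 1) ∧
  (∀ S, w S ≠ 0 → SpansClique t n k H S) ∧
  (∀ v : Fin t × Fin n, ∑ S ∈ Finset.univ.filter (fun S => v ∈ S), w S ≤ 1) ∧
  ∑ S : Finset (Fin t × Fin n), w S = (n : ℝ)

/-!
Let `L` be the set of vertices whose index inside their class is below `d = ⌈(t-k+1)n/t⌉ - 1`,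
so `L` has exactly `d` vertices in each class, and let `H` consist of all legal `k`-sets meeting
`L`. Extending a legal `(k-1)`-set into a new class by any vertex of `L` gives an edge, so the
codegree is at least `d`, with equality for a `(k-1)`-set lying outside `L`. A copy of `K_t^k`
misses `L` in fewer than `k` vertices, since otherwise `k` of them span an edge avoiding `L`;
hence it meets `L` in at least `t-k+1` vertices. Counting the weight of a fractional
`K_t^k`-matching on `L` then bounds its total weight by `t d / (t-k+1) < n`.
-/

section Construction

variable {t n k d : ℕ}

def lowVertices (t n d : ℕ) : Finset (Fin t × Fin n) := {v | (v.2 : ℕ) < d}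

noncomputable def lowEdges (t n k d : ℕ) : Finset (Finset (Fin t × Fin n)) :=
  {e | e.card = k ∧ Legal e ∧ ∃ v ∈ e, (v.2 : ℕ) < d}

@[simp]
lemma mem_lowVertices {v : Fin t × Fin n} : v ∈ lowVertices t n d ↔ (v.2 : ℕ) < d := by
  simp [lowVertices]

@[simp]
lemma mem_lowEdges {e : Finset (Fin t × Fin n)} :
    e ∈ lowEdges t n k d ↔ e.card = k ∧ Legal e ∧ ∃ v ∈ e, (v.2 : ℕ) < d := by
  simp [lowEdges]

lemma card_lowVertices (hd : d ≤ n) : #(lowVertices t n d) = t * d := by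
  have : lowVertices t n d = univ ×ˢ univ.filter fun x : Fin n => (x : ℕ) < d := by ext; simp
  rw [this, card_product, Fin.card_filter_val_lt, min_eq_right hd, card_univ, Fintype.card_fin]

lemma isPartiteKGraph_lowEdges : IsPartiteKGraph t n k (lowEdges t n k d) :=
  fun _ he => ⟨(mem_lowEdges.1 he).1, (mem_lowEdges.1 he).2.1⟩

lemma Legal.insert {T : Finset (Fin t × Fin n)} (hT : Legal T) {j : Fin t}
    (hj : ∀ v ∈ T, v.1 ≠ j) (x : Fin n) : Legal (insert (j, x) T) := by
  intro u hu v hv huv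
  rcases mem_insert.1 hu with rfl | hu <;> rcases mem_insert.1 hv with rfl | hv
  · rfl
  · exact absurd huv.symm (hj v hv)
  · exact absurd huv (hj u hu)
  · exact hT u hu v hv huv

lemma legal_image_row (I : Finset (Fin t)) (x : Fin n) : Legal (I.image fun i => (i, x)) := by
  intro u hu v hv huv
  obtain ⟨i, -, rfl⟩ := mem_image.1 hu
  obtain ⟨i', -, rfl⟩ := mem_image.1 hv
  simp_all

lemma insert_mem_lowEdges_iff (hk : 1 ≤ k) {T : Finset (Fin t × Fin n)} (hT : #T = k - 1)
    (hTl : Legal T) {j : Fin t} (hj : ∀ v ∈ T, v.1 ≠ j) (x : Fin n) :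
    insert (j, x) T ∈ lowEdges t n k d ↔ (x : ℕ) < d ∨ ∃ v ∈ T, (v.2 : ℕ) < d := by
  have hjx : (j, x) ∉ T := fun h => hj _ h rfl
  simp only [mem_lowEdges, card_insert_of_notMem hjx, hT, Nat.sub_add_cancel hk, hTl.insert hj,
    exists_mem_insert, true_and]

lemma codegGE_lowEdges (hk : 1 ≤ k) (hd : d ≤ n) : CodegGE t n k (lowEdges t n k d) d := by
  intro T hT hTl j hj
  have hsub : univ.filter (fun x : Fin n => (x : ℕ) < d) ⊆
      univ.filter fun x : Fin n => insert (j, x) T ∈ lowEdges t n k d :=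
    fun x hx => by
      simp only [mem_filter, mem_univ, true_and] at hx ⊢
      exact (insert_mem_lowEdges_iff hk hT hTl hj x).2 (.inl hx)
  have := card_le_card hsub
  rw [Fin.card_filter_val_lt, min_eq_right hd] at this
  exact_mod_cast this

/-- A `(k-1)`-set inside the last row, avoiding class `j`, has codegree exactly `d` at `j`. -/
lemma not_codegGE_lowEdges (hk : 1 ≤ k) (hkt : k ≤ t) (hdn : d < n) :
    ¬ CodegGE t n k (lowEdges t n k d) (d + 1) := by
  intro hcodeg
  let j : Fin t := ⟨0, by omega⟩
  let last : Fin n := ⟨n - 1, by omega⟩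
  obtain ⟨I, hIsub, hIcard⟩ : ∃ I ⊆ univ.erase j, #I = k - 1 :=
    exists_subset_card_eq <| by
      rw [card_erase_of_mem (mem_univ _), card_univ, Fintype.card_fin]; omega
  let T := I.image fun i => (i, last)
  have hT : #T = k - 1 := by
    rw [card_image_of_injective _ fun a b h => (Prod.mk.inj h).1, hIcard]
  have hj : ∀ v ∈ T, v.1 ≠ j := by
    intro v hv
    obtain ⟨i, hi, rfl⟩ := mem_image.1 hv
    exact ne_of_mem_erase (hIsub hi)
  have hsub : univ.filter (fun x : Fin n => insert (j, x) T ∈ lowEdges t n k d) ⊆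
      univ.filter fun x : Fin n => (x : ℕ) < d := by
    intro x hx
    simp only [mem_filter, mem_univ, true_and,
      insert_mem_lowEdges_iff hk hT (legal_image_row I last) hj] at hx ⊢
    refine hx.resolve_right ?_
    rintro ⟨v, hv, hvd⟩
    obtain ⟨i, -, rfl⟩ := mem_image.1 hv
    simp only [last] at hvd
    omega
  have hle := card_le_card hsub
  rw [Fin.card_filter_val_lt, min_eq_right hdn.le] at hle
  have := hcodeg T hT (legal_image_row I last) j hj
  have : (d : ℝ) + 1 ≤ d := this.trans (by exact_mod_cast hle)
  linarith

lemma SpansClique.lt_card_inter_lowVertices_add {S : Finset (Fin t × Fin n)}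
    (hS : SpansClique t n k (lowEdges t n k d) S) : t < #(S ∩ lowVertices t n d) + k := by
  obtain ⟨hScard, -, hSclique⟩ := hS
  by_contra! hlt
  obtain ⟨e, heS, he⟩ : ∃ e ⊆ S \ lowVertices t n d, #e = k :=
    exists_subset_card_eq (by have := card_inter_add_card_sdiff S (lowVertices t n d); omega)
  obtain ⟨-, -, v, hv, hvd⟩ := mem_lowEdges.1 (hSclique e (heS.trans sdiff_subset) he)
  exact (mem_sdiff.1 (heS hv)).2 (mem_lowVertices.2 hvd)

end Construction

lemma mul_sum_le_card_of_le_card_inter {V : Type*} [Fintype V] [DecidableEq V]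
    (w : Finset V → ℝ) (hw0 : ∀ S, 0 ≤ w S) (hdeg : ∀ v, ∑ S ∈ univ.filter (v ∈ ·), w S ≤ 1)
    (A : Finset V) (m : ℝ) (hm : ∀ S, w S ≠ 0 → m ≤ #(A ∩ S)) :
    m * ∑ S, w S ≤ #A :=
  calc m * ∑ S, w S
      ≤ ∑ S, (#(A ∩ S) : ℝ) * w S := by
        rw [mul_sum]
        refine sum_le_sum fun S _ => ?_
        rcases eq_or_ne (w S) 0 with h | h
        · simp [h]
        · exact mul_le_mul_of_nonneg_right (hm S h) (hw0 S)
    _ = ∑ v ∈ A, ∑ S ∈ univ.filter (v ∈ ·), w S := by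
        simp_rw [sum_filter, ← filter_mem_eq_inter, card_filter, Nat.cast_sum, Nat.cast_ite,
          Nat.cast_one, Nat.cast_zero, sum_mul, ite_mul, one_mul, zero_mul]
        exact sum_comm
    _ ≤ ∑ _v ∈ A, (1 : ℝ) := sum_le_sum fun v _ => hdeg v
    _ = #A := by simp

lemma not_exists_isPerfectFracMatching_lowEdges {t n k d : ℕ} (hdn : d ≤ n)
    (hd : (t : ℝ) * d < ((t : ℝ) - k + 1) * n) :
    ¬ ∃ w, IsPerfectFracMatching t n k (lowEdges t n k d) w := by
  rintro ⟨w, hw01, hwclique, hwdeg, hwsum⟩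
  have hm : ∀ S, w S ≠ 0 → (t : ℝ) - k + 1 ≤ #(lowVertices t n d ∩ S) := by
    intro S hS
    have := (hwclique S hS).lt_card_inter_lowVertices_add
    rw [inter_comm] at this
    have : (t : ℝ) + 1 ≤ #(lowVertices t n d ∩ S) + k := by exact_mod_cast this
    linarith
  have := mul_sum_le_card_of_le_card_inter w (fun S => (hw01 S).1) hwdeg _ _ hm
  rw [hwsum, card_lowVertices hdn] at this
  push_cast at this
  linarith

lemma exists_nat_eq_ceil_sub_one_lt {x : ℝ} (hx : 0 < x) :
    ∃ d : ℕ, (d : ℝ) = ⌈x⌉ - 1 ∧ (d : ℝ) < x := by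
  have hc : 1 ≤ ⌈x⌉ := Int.ceil_pos.2 hx
  have hd : (((⌈x⌉ - 1).toNat : ℕ) : ℝ) = ⌈x⌉ - 1 := by
    exact_mod_cast Int.toNat_of_nonneg (by omega)
  exact ⟨_, hd, by linarith [Int.ceil_lt_add_one x]⟩

/-- Proposition 2.2: the lower bound construction for the fractional threshold. -/
theorem stmt1 (t n k : ℕ) (hk : 2 ≤ k) (hkt : k ≤ t) (hn : 1 ≤ n) :
    ∃ H : Finset (Finset (Fin t × Fin n)), IsPartiteKGraph t n k H ∧
      -- the minimum partite codegree equals ⌈(t-k+1)n/t⌉ - 1 :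
      CodegGE t n k H ((⌈(((t : ℝ) - k + 1) * n) / t⌉ : ℤ) - 1 : ℝ) ∧
      ¬ CodegGE t n k H ((⌈(((t : ℝ) - k + 1) * n) / t⌉ : ℤ) : ℝ) ∧
      ¬ ∃ w, IsPerfectFracMatching t n k H w := by
  have htR : (0 : ℝ) < t := by exact_mod_cast (show 0 < t by omega)
  have hkR : (2 : ℝ) ≤ k := by exact_mod_cast hk
  have hktR : (k : ℝ) ≤ t := by exact_mod_cast hkt
  have hnR : (1 : ℝ) ≤ n := by exact_mod_cast hn
  set x := ((t : ℝ) - k + 1) * n / t with hx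
  have htx : t * x = ((t : ℝ) - k + 1) * n := by rw [hx]; field_simp
  obtain ⟨d, hdc, hdx⟩ := exists_nat_eq_ceil_sub_one_lt (x := x)
    (div_pos (mul_pos (by linarith) (by linarith)) htR)
  have hxn : x ≤ n := by rw [hx, div_le_iff₀ htR]; nlinarith
  have hdn : d < n := by exact_mod_cast hdx.trans_le hxn
  refine ⟨lowEdges t n k d, isPartiteKGraph_lowEdges, ?_, ?_, ?_⟩
  · rw [← hdc]; exact codegGE_lowEdges (by omega) hdn.le
  · rw [show (⌈x⌉ : ℝ) = d + 1 by linarith]; exact not_codegGE_lowEdges (by omega) hkt hdn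
  · exact not_exists_isPerfectFracMatching_lowEdges hdn.le (by nlinarith)
end

section
/- Let $2 \le k \le t$ be integers, $n \ge 1$, and let $\widetilde{\delta} \le n$ be an integer. For $j \in [t]$ set $r(j) = n - \binom{j-1}{k-1}(n - \widetilde{\delta})$, and suppose $r(t) \ge 1$. Let $H$ be a balanced $t$-partite $k$-graph with classes $V_1, \dots, V_t$ of size $n$ and $\widetilde{\delta}_{k-1}(H) \ge \widetilde{\delta}$. Then there exist indices $j_1, \dots, j_t \in [n]$ with $j_i \ge r(i)$ for every $i \in [t]$ such that the vertices $v_{1, j_1}, \dots, v_{t, j_t}$ span a copy of $K_t^k$ in $H$, where $V_i = \{v_{i,1}, \dots, v_{i,n}\}$ is any fixed enumeration of each class. -/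
/-! Choose the vertices class by class. When the vertex of class `i` (0-based) is chosen, the
partial clique has `i` vertices and each of its `C(i, k-1)` subsets of size `k-1` has at most
`n - δ` non-neighbours in class `i` by the codegree condition. So at most `C(i, k-1)(n - δ)`
vertices of class `i` are blocked, and one of the `C(i, k-1)(n - δ) + 1` vertices of highest
index is free. -/

open Finset
open scoped Classical

section GreedyClique

variable {t n k : ℕ} {H : Finset (Finset (Fin t × Fin n))}

def transversal (f : Fin t → Fin n) (s : Finset (Fin t)) : Finset (Fin t × Fin n) :=
  s.image fun i => (i, f i)

lemma card_transversal (f : Fin t → Fin n) (s : Finset (Fin t)) :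
    #(transversal f s) = #s :=
  card_image_of_injective _ fun _ _ h => congrArg Prod.fst h

lemma legal_transversal (f : Fin t → Fin n) (s : Finset (Fin t)) : Legal (transversal f s) := by
  simp only [Legal, transversal, mem_image]
  rintro _ ⟨a, -, rfl⟩ _ ⟨b, -, rfl⟩ (rfl : a = b)
  rfl

lemma fst_ne_of_mem_transversal {f : Fin t → Fin n} {s : Finset (Fin t)} {i : Fin t}
    (hi : i ∉ s) : ∀ v ∈ transversal f s, v.1 ≠ i := by
  simp only [transversal, mem_image]
  rintro _ ⟨j, hj, rfl⟩ rfl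
  exact hi hj

lemma transversal_update_insert (f : Fin t → Fin n) {s : Finset (Fin t)} {i : Fin t}
    (hi : i ∉ s) (x : Fin n) :
    transversal (Function.update f i x) (insert i s) = insert (i, x) (transversal f s) := by
  rw [transversal, image_insert, Function.update_self]
  congr 1
  refine image_congr fun j hj => ?_
  rw [Function.update_of_ne (ne_of_mem_of_not_mem hj hi)]

def IsCompleteOn (k : ℕ) (H : Finset (Finset (Fin t × Fin n))) (S : Finset (Fin t × Fin n)) :
    Prop :=
  ∀ e ⊆ S, #e = k → e ∈ H

lemma isCompleteOn_empty (hk : k ≠ 0) : IsCompleteOn k H ∅ := by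
  intro e he hek
  rw [subset_empty.mp he, card_empty] at hek
  exact absurd hek.symm hk

lemma card_filter_insert_notMem_le {δ : ℕ} (hcod : CodegGE t n k H δ)
    {T : Finset (Fin t × Fin n)} (hT : #T = k - 1) (hTl : Legal T) {i : Fin t}
    (hi : ∀ v ∈ T, v.1 ≠ i) :
    #{x : Fin n | insert (i, x) T ∉ H} ≤ n - δ := by
  have hgood : δ ≤ #{x : Fin n | insert (i, x) T ∈ H} := by exact_mod_cast hcod T hT hTl i hi
  have hsplit := card_filter_add_card_filter_not (s := (univ : Finset (Fin n)))
    (p := fun x => insert (i, x) T ∈ H)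
  rw [card_univ, Fintype.card_fin] at hsplit
  omega

def blocked (k : ℕ) (H : Finset (Finset (Fin t × Fin n))) (S : Finset (Fin t × Fin n))
    (i : Fin t) : Finset (Fin n) :=
  (S.powersetCard (k - 1)).biUnion fun T => {x : Fin n | insert (i, x) T ∉ H}

lemma card_blocked_le {δ : ℕ} (hcod : CodegGE t n k H δ) {S : Finset (Fin t × Fin n)}
    (hS : Legal S) {i : Fin t} (hi : ∀ v ∈ S, v.1 ≠ i) :
    #(blocked k H S i) ≤ (#S).choose (k - 1) * (n - δ) :=
  calc #(blocked k H S i)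
      ≤ ∑ T ∈ S.powersetCard (k - 1), #{x : Fin n | insert (i, x) T ∉ H} := card_biUnion_le
    _ ≤ ∑ _T ∈ S.powersetCard (k - 1), (n - δ) := sum_le_sum fun T hT => by
        obtain ⟨hTS, hTcard⟩ := mem_powersetCard.mp hT
        exact card_filter_insert_notMem_le hcod hTcard
          (fun u hu v hv => hS u (hTS hu) v (hTS hv)) fun v hv => hi v (hTS hv)
    _ = (#S).choose (k - 1) * (n - δ) := by rw [sum_const, card_powersetCard, smul_eq_mul]

lemma IsCompleteOn.insert {S : Finset (Fin t × Fin n)} (hS : IsCompleteOn k H S) {i : Fin t}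
    {x : Fin n} (hx : x ∉ blocked k H S i) : IsCompleteOn k H (insert (i, x) S) := by
  intro e he hek
  by_cases hmem : (i, x) ∈ e
  · have hT : e.erase (i, x) ∈ S.powersetCard (k - 1) := by
      refine mem_powersetCard.mpr ⟨fun y hy => ?_, by rw [card_erase_of_mem hmem, hek]⟩
      obtain ⟨hne, hye⟩ := mem_erase.mp hy
      exact (mem_insert.mp (he hye)).resolve_left hne
    have := not_not.mp fun h => hx (mem_biUnion.mpr ⟨_, hT, mem_filter.mpr ⟨mem_univ x, h⟩⟩)
    rwa [insert_erase hmem] at this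
  · exact hS e (fun y hy => (mem_insert.mp (he hy)).resolve_left (ne_of_mem_of_not_mem hy hmem))
      hek

lemma exists_high_notMem_of_card_le {n c : ℕ} {B : Finset (Fin n)} (hB : #B ≤ c) (hc : c < n) :
    ∃ x : Fin n, x ∉ B ∧ n ≤ x.val + 1 + c := by
  obtain ⟨x, hx, hxB⟩ := exists_mem_notMem_of_card_lt_card
    (s := B) (t := Ici (⟨n - 1 - c, by omega⟩ : Fin n)) (by simp only [Fin.card_Ici]; omega)
  refine ⟨x, hxB, ?_⟩
  rw [mem_Ici, Fin.le_iff_val_le_val] at hx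
  simp only at hx
  omega

lemma exists_greedy_clique {δ : ℕ} (hcod : CodegGE t n k H δ) (hk : k ≠ 0) (hn : 1 ≤ n)
    (hroom : ∀ m < t, m.choose (k - 1) * (n - δ) < n) :
    ∀ m ≤ t, ∃ f : Fin t → Fin n,
      (∀ i : Fin t, i.val < m → n ≤ (f i).val + 1 + i.val.choose (k - 1) * (n - δ)) ∧
      IsCompleteOn k H (transversal f {i | i.val < m}) := by
  intro m
  induction m with
  | zero =>
    refine fun _ => ⟨fun _ => ⟨0, hn⟩, fun i hi => absurd hi (Nat.not_lt_zero _), ?_⟩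
    simpa [transversal] using isCompleteOn_empty (H := H) hk
  | succ m ih =>
    intro hm
    obtain ⟨f, hbound, hclique⟩ := ih (by omega)
    set i : Fin t := ⟨m, hm⟩
    set s : Finset (Fin t) := {j | j.val < m}
    have his : i ∉ s := by simp [s, i]
    have hcard : #(transversal f s) = m := by
      rw [card_transversal, Fin.card_filter_val_lt]; omega
    obtain ⟨x, hxB, hx⟩ := exists_high_notMem_of_card_le
      (card_blocked_le hcod (legal_transversal f s) (fst_ne_of_mem_transversal his))
      (hcard ▸ hroom m hm)
    have hs : ({j | j.val < m + 1} : Finset (Fin t)) = insert i s := by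
      ext j
      simp only [Order.lt_add_one_iff, mem_filter, mem_univ, true_and, mem_insert, Fin.ext_iff,
        i, s]
      omega
    refine ⟨Function.update f i x, fun j hj => ?_, ?_⟩
    · rcases Nat.lt_succ_iff_lt_or_eq.mp hj with hjm | rfl
      · rw [Function.update_of_ne (by rintro rfl; simp [i] at hjm)]
        exact hbound j hjm
      · rw [show j = i from rfl, Function.update_self]
        rwa [hcard] at hx
    · rw [hs, transversal_update_insert f his]
      exact hclique.insert hxB

end GreedyClique

theorem stmt5_general (t n k δ : ℕ) (hk : 2 ≤ k) (hn : 1 ≤ n) (hδ : δ ≤ n)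
    (hr : 1 ≤ (n : ℤ) - ((t - 1).choose (k - 1) : ℤ) * ((n : ℤ) - (δ : ℤ)))
    (H : Finset (Finset (Fin t × Fin n)))
    (hcod : CodegGE t n k H (δ : ℝ)) :
    ∃ f : Fin t → Fin n,
      (∀ i : Fin t,
        (n : ℤ) - ((i.val).choose (k - 1) : ℤ) * ((n : ℤ) - (δ : ℤ)) ≤ ((f i : ℕ) : ℤ) + 1) ∧
      SpansClique t n k H (Finset.univ.image (fun i : Fin t => (i, f i))) := by
  have hroom : ∀ m < t, m.choose (k - 1) * (n - δ) < n := fun m hm => by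
    have hchoose : m.choose (k - 1) ≤ (t - 1).choose (k - 1) := Nat.choose_le_choose _ (by omega)
    zify [hδ] at hchoose ⊢
    nlinarith
  obtain ⟨f, hbound, hclique⟩ := exists_greedy_clique hcod (by omega) hn hroom t le_rfl
  have huniv : ({i | i.val < t} : Finset (Fin t)) = univ := filter_true_of_mem fun i _ => i.isLt
  refine ⟨f, fun i => ?_, (card_transversal f univ).trans (card_fin t), legal_transversal f univ,
    huniv ▸ hclique⟩
  have := hbound i i.isLt
  zify [hδ] at this
  linarith

/-- A copy of `K_t^k` with prescribed rank bounds: there is a clique using, in class `i`,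
a vertex of index (1-based) at least `r(i) = n - C(i-1, k-1)(n - δ)`. -/
theorem stmt5 (t n k δ : ℕ) (hk : 2 ≤ k) (hkt : k ≤ t) (hn : 1 ≤ n) (hδ : δ ≤ n)
    (hr : 1 ≤ (n : ℤ) - ((t - 1).choose (k - 1) : ℤ) * ((n : ℤ) - (δ : ℤ)))
    (H : Finset (Finset (Fin t × Fin n))) (hH : IsPartiteKGraph t n k H)
    (hcod : CodegGE t n k H (δ : ℝ)) :
    ∃ f : Fin t → Fin n,
      (∀ i : Fin t,
        (n : ℤ) - ((i.val).choose (k - 1) : ℤ) * ((n : ℤ) - (δ : ℤ)) ≤ ((f i : ℕ) : ℤ) + 1) ∧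
      SpansClique t n k H (Finset.univ.image (fun i : Fin t => (i, f i))) :=
  stmt5_general t n k δ hk hn hδ hr H hcod
end

section
/- Let $2 \le k < t$ be integers, let $n \ge 1$, let $\widetilde{\delta} \le n$, and for $j \in [t]$ set $r(j) = n - \binom{j-1}{k-1}(n - \widetilde{\delta})$. Suppose for each $i \in [t]$, $(w_{i,j})_{j \in [t]}$ are nonnegative reals with $w_{i,j} \le w_{i,j'}$ whenever $j \le j'$, $w_{i,j} = 0$ for $j \in [k-1]$, and $\sum_{i \in [t]} \sum_{j \in [t]} w_{i,j} \ge t$. Then $\sum_{i \in [t]} \big( \sum_{j \in [t-1]} (r(j) - r(j+1)) w_{i,j} + \frac{r(k)-r(t)}{t-k} w_{i,t} \big) \ge \frac{t (r(k) - r(t))}{t-k}$. -/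
open Finset

lemma sum_tele7 (r : ℕ → ℝ) (a b : ℕ) (h : a ≤ b) :
    ∑ j ∈ Finset.Ico a b, (r j - r (j + 1)) = r a - r b := by
  induction b, h using Nat.le_induction with
  | base => simp
  | succ b hb ih => rw [Finset.sum_Ico_succ_top hb, ih]; ring

/-- Claim 2.3 (the multiset rearrangement claim), abstracted. -/
theorem stmt7 (t n k δ : ℕ) (hk : 2 ≤ k) (hkt : k < t) (hn : 1 ≤ n) (hδ : δ ≤ n)
    (r : ℕ → ℝ)
    (hrdef : ∀ j, r j = (n : ℝ) - ((j - 1).choose (k - 1) : ℝ) * ((n : ℝ) - (δ : ℝ)))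
    (w : Fin t → ℕ → ℝ)
    (hw0 : ∀ i j, 0 ≤ w i j)
    (hmono : ∀ i : Fin t, ∀ j j' : ℕ, j ≤ j' → j' ≤ t → w i j ≤ w i j')
    (hzero : ∀ i : Fin t, ∀ j, 1 ≤ j → j ≤ k - 1 → w i j = 0)
    (hsum : (t : ℝ) ≤ ∑ i : Fin t, ∑ j ∈ Finset.Icc 1 t, w i j) :
    (t : ℝ) * (r k - r t) / ((t : ℝ) - k) ≤
      ∑ i : Fin t,
        (∑ j ∈ Finset.Icc 1 (t - 1), (r j - r (j + 1)) * w i j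
          + (r k - r t) / ((t : ℝ) - k) * w i t) := by
  have hnδ : (0 : ℝ) ≤ (n : ℝ) - δ := by
    have : (δ : ℝ) ≤ n := by exact_mod_cast hδ
    linarith
  -- the difference formula
  have hAc : ∀ j, k ≤ j → r j - r (j + 1) = ((j - 1).choose (k - 2) : ℝ) * ((n : ℝ) - δ) := by
    intro j hj
    obtain ⟨j', rfl⟩ : ∃ j', j = j' + 1 := ⟨j - 1, by omega⟩
    obtain ⟨k', rfl⟩ : ∃ k', k = k' + 2 := ⟨k - 2, by omega⟩
    rw [hrdef, hrdef]
    have h1 : (j' + 1 + 1 - 1 : ℕ) = j' + 1 := by omega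
    have h2 : (j' + 1 - 1 : ℕ) = j' := by omega
    have h3 : (k' + 2 - 1 : ℕ) = k' + 1 := by omega
    have h4 : (k' + 2 - 2 : ℕ) = k' := by omega
    rw [h1, h2, h3, h4]
    have hp : (j' + 1).choose (k' + 1) = j'.choose k' + j'.choose (k' + 1) :=
      Nat.choose_succ_succ j' k'
    rw [hp]
    push_cast
    ring
  have hc0 : ∀ j, k ≤ j → 0 ≤ r j - r (j + 1) := by
    intro j hj
    rw [hAc j hj]
    positivity
  have hcmono : ∀ j j', k ≤ j → j ≤ j' → r j - r (j + 1) ≤ r j' - r (j' + 1) := by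
    intro j j' hj hjj'
    rw [hAc j hj, hAc j' (le_trans hj hjj')]
    have : (j - 1).choose (k - 2) ≤ (j' - 1).choose (k - 2) :=
      Nat.choose_le_choose _ (by omega)
    exact mul_le_mul_of_nonneg_right (by exact_mod_cast this) hnδ
  set A : ℝ := r k - r t with hA_def
  have htkR : ((t - k : ℕ) : ℝ) = (t : ℝ) - k := by
    push_cast [Nat.cast_sub hkt.le]; ring
  have htk0 : (0 : ℝ) < (t : ℝ) - k := by
    rw [← htkR]; exact_mod_cast Nat.sub_pos_of_lt hkt
  have hAsum : ∑ j ∈ Finset.Ico k t, (r j - r (j + 1)) = A := sum_tele7 r k t hkt.le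
  have hA0 : 0 ≤ A := by
    rw [← hAsum]
    exact Finset.sum_nonneg fun j hj => hc0 j (Finset.mem_Ico.mp hj).1
  set C : ℝ := A / ((t : ℝ) - k) with hC_def
  have hC0 : 0 ≤ C := div_nonneg hA0 htk0.le
  -- per-i inequality
  have key : ∀ i : Fin t,
      C * ∑ j ∈ Finset.Icc 1 t, w i j ≤
        ∑ j ∈ Finset.Icc 1 (t - 1), (r j - r (j + 1)) * w i j + C * w i t := by
    intro i
    -- restrict sums to Ico k t
    have hsub1 : Finset.Ico k t ⊆ Finset.Icc 1 (t - 1) := by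
      intro x hx
      simp only [Finset.mem_Ico, Finset.mem_Icc] at *
      omega
    have hL : ∑ j ∈ Finset.Icc 1 (t - 1), (r j - r (j + 1)) * w i j
        = ∑ j ∈ Finset.Ico k t, (r j - r (j + 1)) * w i j := by
      refine (Finset.sum_subset hsub1 ?_).symm
      intro x hx hnx
      simp only [Finset.mem_Ico, Finset.mem_Icc] at *
      have : w i x = 0 := hzero i x (by omega) (by omega)
      rw [this, mul_zero]
    have hsub2 : Finset.Ico k (t + 1) ⊆ Finset.Icc 1 t := by
      intro x hx
      simp only [Finset.mem_Ico, Finset.mem_Icc] at *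
      omega
    have hR : ∑ j ∈ Finset.Icc 1 t, w i j
        = ∑ j ∈ Finset.Ico k t, w i j + w i t := by
      rw [← Finset.sum_Ico_succ_top hkt.le]
      refine (Finset.sum_subset hsub2 ?_).symm
      intro x hx hnx
      simp only [Finset.mem_Ico, Finset.mem_Icc] at hx hnx
      exact hzero i x (by omega) (by omega)
    rw [hL, hR]
    -- Chebyshev
    have hmv : MonovaryOn (fun j => r j - r (j + 1)) (w i) (↑(Finset.Ico k t) : Set ℕ) := by
      intro j₁ hj₁ j₂ hj₂ hw
      simp only [Finset.coe_Ico, Set.mem_Ico] at hj₁ hj₂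
      by_cases hle : j₁ ≤ j₂
      · exact hcmono j₁ j₂ hj₁.1 hle
      · exact absurd (hmono i j₂ j₁ (by omega) (by omega)) (not_le.mpr hw)
    have hcheb := hmv.sum_mul_sum_le_card_mul_sum
    rw [Nat.card_Ico, hAsum, htkR] at hcheb
    -- hcheb : A * ∑ w ≤ ((t:ℝ)-k) * ∑ (c j * w j)
    have hCW : C * ∑ j ∈ Finset.Ico k t, w i j
        ≤ ∑ j ∈ Finset.Ico k t, (r j - r (j + 1)) * w i j := by
      rw [hC_def, div_mul_eq_mul_div, div_le_iff₀ htk0]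
      calc A * ∑ j ∈ Finset.Ico k t, w i j
          ≤ ((t : ℝ) - k) * ∑ j ∈ Finset.Ico k t, (r j - r (j + 1)) * w i j := hcheb
        _ = (∑ j ∈ Finset.Ico k t, (r j - r (j + 1)) * w i j) * ((t : ℝ) - k) := by ring
    have := mul_le_mul_of_nonneg_left (le_refl (w i t)) hC0
    linarith [hCW]
  calc (t : ℝ) * A / ((t : ℝ) - k)
      = C * (t : ℝ) := by rw [hC_def]; ring
    _ ≤ C * ∑ i : Fin t, ∑ j ∈ Finset.Icc 1 t, w i j := mul_le_mul_of_nonneg_left hsum hC0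
    _ = ∑ i : Fin t, C * ∑ j ∈ Finset.Icc 1 t, w i j := by rw [Finset.mul_sum]
    _ ≤ _ := Finset.sum_le_sum fun i _ => key i
end
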